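/- Assume α, β > 0, h ≥ 1, P_tx > 0, C > 0, A'_L ≥ A'_N > 0 and 0 < γ_L ≤ γ_N. For any initial ground distance r₀ > 0, drone speed v > 0 and transmission time τ > 0, set t_m = min(r₀/v, τ) and c = t_m/τ, and define the dynamic-repositioning average spectral efficiency Φ̄_mob(h, r₀) = c · (1/(v·t_m)) · ∫_{r₀ − v·t_m}^{r₀} Φ̄(h, r) dr + (1 − c) · Φ̄(h, 0). Then Φ̄_mob(h, r₀) ≥ Φ̄(h, r₀); that is, a drone that flies toward the user at speed v during the transmission achieves at least the average spectral efficiency of a drone hovering at ground distance r₀. -/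

import Mathlib

/-!
Moving towards the user helps every ingredient of `Phibar`: the elevation angle, hence the LoS
probability, increases and both path losses decrease; since the LoS link is never worse than the
NLoS one (`A'_L ≥ A'_N`, `γ_L ≤ γ_N`, `h ≥ 1`), shifting weight towards LoS helps as well. So
`Phibar` is antitone in the ground distance, and the mobile efficiency, a convex combination of the
mean of `Phibar` over `[r₀ - v t_m, r₀]` and of its value at `0`, is at least its value at `r₀`.
-/

/-- LoS probability: at ground distance `r > 0` the elevation angle in degrees is
`(180/π) · arctan (h/r)`; at `r = 0` the angle is 90 degrees. -/
noncomputable def PLoS (a b h r : ℝ) : ℝ :=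
  if r = 0 then 1 / (1 + a * Real.exp (-b * (90 - a)))
  else 1 / (1 + a * Real.exp (-b * ((180 / Real.pi) * Real.arctan (h / r) - a)))

/-- LoS spectral efficiency. -/
noncomputable def PhiL (Ptx Cst AL gL h r : ℝ) : ℝ :=
  Real.logb 2 (1 + Ptx * AL * (h ^ 2 + r ^ 2) ^ (-(gL / 2)) / Cst)

/-- NLoS spectral efficiency. -/
noncomputable def PhiN (Ptx Cst AN gN h r : ℝ) : ℝ :=
  Real.logb 2 (1 + Ptx * AN * (h ^ 2 + r ^ 2) ^ (-(gN / 2)) / Cst)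

/-- Average spectral efficiency: LoS/NLoS mixture weighted by the LoS probability. -/
noncomputable def Phibar (a b Ptx Cst AL AN gL gN h r : ℝ) : ℝ :=
  PLoS a b h r * PhiL Ptx Cst AL gL h r + (1 - PLoS a b h r) * PhiN Ptx Cst AN gN h r

open Real Set

lemma logistic_monotone {a b : ℝ} (ha : 0 ≤ a) (hb : 0 ≤ b) :
    Monotone fun X : ℝ => 1 / (1 + a * exp (-b * (X - a))) := by
  intro X Y hXY
  have hexp : exp (-b * (Y - a)) ≤ exp (-b * (X - a)) := exp_le_exp.2 (by nlinarith)
  exact one_div_le_one_div_of_le (by positivity) (by gcongr)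

lemma PLoS_pos {a : ℝ} (ha : 0 ≤ a) (b h r : ℝ) : 0 < PLoS a b h r := by
  unfold PLoS; split <;> positivity

lemma PLoS_le_one {a : ℝ} (ha : 0 ≤ a) (b h r : ℝ) : PLoS a b h r ≤ 1 := by
  unfold PLoS; split <;> exact div_le_one_of_le₀ (by simp; positivity) (by positivity)

lemma PLoS_antitoneOn {a b h : ℝ} (ha : 0 ≤ a) (hb : 0 ≤ b) (hh : 0 ≤ h) :
    AntitoneOn (PLoS a b h) (Ici 0) := by
  intro r (hr : 0 ≤ r) s _ hrs
  rcases hrs.eq_or_lt with rfl | hrs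
  · rfl
  have hs : 0 < s := hr.trans_lt hrs
  unfold PLoS
  rw [if_neg hs.ne']
  rcases hr.eq_or_lt with rfl | hr
  · rw [if_pos rfl]
    refine logistic_monotone ha hb ?_
    calc 180 / π * arctan (h / s) ≤ 180 / π * (π / 2) := by
          gcongr; exact (arctan_lt_pi_div_two _).le
      _ = 90 := by field_simp; norm_num
  · rw [if_neg hr.ne']
    exact logistic_monotone ha hb (by gcongr)

lemma PhiN_eq_PhiL : PhiN = PhiL := rfl

lemma PhiL_antitoneOn {Ptx Cst A g h : ℝ} (hPtx : 0 ≤ Ptx) (hC : 0 ≤ Cst) (hA : 0 ≤ A)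
    (hg : 0 ≤ g) (hh : 0 < h) : AntitoneOn (PhiL Ptx Cst A g h) (Ici 0) := by
  intro r (hr : 0 ≤ r) s _ hrs
  unfold PhiL
  apply logb_le_logb_of_le one_lt_two (by positivity)
  have hpow : (h ^ 2 + s ^ 2) ^ (-(g / 2)) ≤ (h ^ 2 + r ^ 2) ^ (-(g / 2)) :=
    rpow_le_rpow_of_nonpos (by positivity) (by gcongr) (by linarith)
  gcongr

lemma PhiL_mono {Ptx Cst A A' g g' h : ℝ} (hPtx : 0 ≤ Ptx) (hC : 0 ≤ Cst) (hA : 0 ≤ A)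
    (hAA' : A ≤ A') (hgg' : g' ≤ g) (hh : 1 ≤ h) (r : ℝ) :
    PhiL Ptx Cst A g h r ≤ PhiL Ptx Cst A' g' h r := by
  have hbase : 1 ≤ h ^ 2 + r ^ 2 := by nlinarith
  have hA' : 0 ≤ A' := hA.trans hAA'
  unfold PhiL
  apply logb_le_logb_of_le one_lt_two (by positivity)
  have hpow : (h ^ 2 + r ^ 2) ^ (-(g / 2)) ≤ (h ^ 2 + r ^ 2) ^ (-(g' / 2)) :=
    rpow_le_rpow_of_exponent_le hbase (by linarith)
  gcongr

lemma mixture_le_mixture {p q L L' N N' : ℝ} (hq : 0 ≤ q) (hp : p ≤ 1) (hqp : q ≤ p)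
    (hL : L' ≤ L) (hN : N' ≤ N) (hNL : N ≤ L) :
    q * L' + (1 - q) * N' ≤ p * L + (1 - p) * N := by
  nlinarith

lemma Phibar_antitoneOn {a b Ptx Cst AL AN gL gN h : ℝ}
    (ha : 0 ≤ a) (hb : 0 ≤ b) (hh : 1 ≤ h) (hPtx : 0 ≤ Ptx) (hC : 0 ≤ Cst)
    (hAN : 0 ≤ AN) (hALN : AN ≤ AL) (hgL : 0 ≤ gL) (hgLN : gL ≤ gN) :
    AntitoneOn (Phibar a b Ptx Cst AL AN gL gN h) (Ici 0) := by
  intro r hr s hs hrs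
  have hh0 : 0 < h := one_pos.trans_le hh
  rw [Phibar, Phibar, PhiN_eq_PhiL]
  exact mixture_le_mixture (PLoS_pos ha b h s).le (PLoS_le_one ha b h r)
    (PLoS_antitoneOn ha hb hh0.le hr hs hrs)
    (PhiL_antitoneOn hPtx hC (hAN.trans hALN) hgL hh0 hr hs hrs)
    (PhiL_antitoneOn hPtx hC hAN (hgL.trans hgLN) hh0 hr hs hrs)
    (PhiL_mono hPtx hC hAN hALN hgLN hh r)

lemma AntitoneOn.le_average_intervalIntegral {f : ℝ → ℝ} {a b : ℝ} (hab : a < b)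
    (hf : AntitoneOn f (Icc a b)) : f b ≤ 1 / (b - a) * ∫ x in a..b, f x := by
  have hmem : b ∈ Icc a b := right_mem_Icc.2 hab.le
  have hint : (b - a) * f b ≤ ∫ x in a..b, f x := by
    simpa using intervalIntegral.integral_mono_on hab.le
      (intervalIntegrable_const (μ := MeasureTheory.volume))
      (AntitoneOn.intervalIntegrable (by rwa [uIcc_of_le hab.le])) fun x hx => hf hx hmem hx.2
  rw [one_div, inv_mul_eq_div, le_div_iff₀ (sub_pos.2 hab)]
  linarith

open intervalIntegral in
/-- A drone that flies toward the user at speed `v` for time `t_m = min(r₀/v, τ)` and then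
hovers above the user achieves a time-averaged spectral efficiency at least that of a drone
hovering at ground distance `r₀`. -/
theorem mob_se_ge_hover_se (a b Ptx Cst AL AN gL gN h r₀ v τ : ℝ)
    (ha : 0 < a) (hb : 0 < b) (hh : 1 ≤ h) (hPtx : 0 < Ptx) (hC : 0 < Cst)
    (hAN : 0 < AN) (hALN : AN ≤ AL) (hgL : 0 < gL) (hgLN : gL ≤ gN)
    (hr₀ : 0 < r₀) (hv : 0 < v) (hτ : 0 < τ)
    (tm c : ℝ) (htm : tm = min (r₀ / v) τ) (hc : c = tm / τ) :
    c * ((1 / (v * tm)) *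
          ∫ x in (r₀ - v * tm)..r₀, Phibar a b Ptx Cst AL AN gL gN h x) +
        (1 - c) * Phibar a b Ptx Cst AL AN gL gN h 0 ≥
      Phibar a b Ptx Cst AL AN gL gN h r₀ := by
  have hanti := Phibar_antitoneOn ha.le hb.le hh hPtx.le hC.le hAN.le hALN hgL.le hgLN
  have htm_pos : 0 < tm := htm ▸ lt_min (div_pos hr₀ hv) hτ
  have hflight_le : v * tm ≤ r₀ := by
    rw [← le_div_iff₀' hv, htm]; exact min_le_left _ _
  have hc_mem : c ∈ Icc (0 : ℝ) 1 := by
    rw [hc]; exact ⟨by positivity, div_le_one_of_le₀ (htm ▸ min_le_right _ _) hτ.le⟩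
  have hflight : Phibar a b Ptx Cst AL AN gL gN h r₀ ≤ 1 / (v * tm) *
      ∫ x in (r₀ - v * tm)..r₀, Phibar a b Ptx Cst AL AN gL gN h x := by
    simpa using (hanti.mono fun x hx => (sub_nonneg.2 hflight_le).trans hx.1 :
      AntitoneOn _ (Icc (r₀ - v * tm) r₀)).le_average_intervalIntegral
      (sub_lt_self _ (mul_pos hv htm_pos))
  have hhover := hanti self_mem_Ici hr₀.le hr₀.le
  nlinarith [hc_mem.1, hc_mem.2]
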